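/- arXiv:2312.09319 — 5 statements merged into one kernel-verified Lean document; each statement's English description precedes it below -/
import Mathlib

section
/- Let β > 0, F ≥ 0, λ_n ≥ 0, and λ_τ, v ∈ ℝ^{d−1}. Denote by [·]_α the projection onto the closed ball of radius α = F λ_n centered at 0. Then λ_τ = [λ_τ + β v]_{F λ_n} holds if and only if: |λ_τ| ≤ F λ_n, and λ_τ · v − F λ_n |v| = 0. -/
/-!
Write `x = λ + β v`. If `‖x‖ ≤ α` the projection fixes `x`, so the fixed-point equation forces
`v = 0`; otherwise it says that `λ` is the radial rescaling of `x` onto the sphere of radius `α`,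
i.e. `‖λ‖ = α` and `λ`, `v` lie on a common ray. For `λ` in the ball, `⟪λ, v⟫ = α ‖v‖` is the
equality case of Cauchy–Schwarz, which gives exactly the same alternative.
-/

open scoped RealInnerProductSpace

/-- Projection onto the closed ball of radius `α` centered at `0`. -/
noncomputable def ballProj {m : ℕ} (α : ℝ) (x : EuclideanSpace ℝ (Fin m)) :
    EuclideanSpace ℝ (Fin m) :=
  if ‖x‖ ≤ α then x else (α / ‖x‖) • x

theorem sameRay_pos_smul_right_iff {M : Type*} [AddCommGroup M] [Module ℝ M] {x y : M} {a : ℝ}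
    (ha : 0 < a) : SameRay ℝ x (a • y) ↔ SameRay ℝ x y :=
  ⟨fun h => by simpa [ha.ne'] using h.pos_smul_right (inv_pos.2 ha), fun h => h.pos_smul_right ha⟩

section InnerProductSpace

variable {E : Type*} [NormedAddCommGroup E] [InnerProductSpace ℝ E]

theorem sameRay_iff_inner_eq_norm_mul {x y : E} : SameRay ℝ x y ↔ ⟪x, y⟫ = ‖x‖ * ‖y‖ := by
  rw [sameRay_iff_norm_smul_eq, inner_eq_norm_mul_iff_real, eq_comm]

theorem inner_eq_mul_norm_iff_of_norm_le {u v : E} {α : ℝ} (hu : ‖u‖ ≤ α) :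
    ⟪u, v⟫ = α * ‖v‖ ↔ v = 0 ∨ (‖u‖ = α ∧ SameRay ℝ u v) := by
  rw [sameRay_iff_inner_eq_norm_mul]
  constructor
  · intro h
    refine or_iff_not_imp_left.2 fun hv => ?_
    have hle : α * ‖v‖ ≤ ‖u‖ * ‖v‖ := h ▸ real_inner_le_norm u v
    have hnorm : ‖u‖ = α := le_antisymm hu (le_of_mul_le_mul_right hle (norm_pos_iff.2 hv))
    exact ⟨hnorm, by rw [h, hnorm]⟩
  · rintro (rfl | ⟨rfl, h⟩)
    · simp
    · exact h

end InnerProductSpace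

section BallProj

variable {m : ℕ} {α : ℝ}

theorem ballProj_of_norm_le {x : EuclideanSpace ℝ (Fin m)} (h : ‖x‖ ≤ α) : ballProj α x = x :=
  if_pos h

theorem ballProj_of_le_norm {x : EuclideanSpace ℝ (Fin m)} (h : α ≤ ‖x‖) :
    ballProj α x = (α / ‖x‖) • x := by
  unfold ballProj
  split_ifs with hx
  · obtain rfl | hx0 := eq_or_ne x 0
    · simp
    · rw [le_antisymm h hx, div_self (norm_ne_zero_iff.2 hx0), one_smul]
  · rfl

theorem eq_ballProj_add_iff (hα : 0 ≤ α) {u w : EuclideanSpace ℝ (Fin m)} :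
    u = ballProj α (u + w) ↔ ‖u‖ ≤ α ∧ (w = 0 ∨ (‖u‖ = α ∧ SameRay ℝ u w)) := by
  constructor
  · intro h
    rcases le_or_gt ‖u + w‖ α with hx | hx
    · rw [ballProj_of_norm_le hx] at h
      obtain rfl : w = 0 := left_eq_add.mp h
      simpa using hx
    · rw [ballProj_of_le_norm hx.le] at h
      set x := u + w with hxdef
      have hx0 : 0 < ‖x‖ := hα.trans_lt hx
      have hnorm : ‖u‖ = α := by
        rw [h, norm_smul, Real.norm_of_nonneg (div_nonneg hα hx0.le), div_mul_cancel₀ _ hx0.ne']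
      have hw : w = (1 - α / ‖x‖) • x := by
        rw [sub_smul, one_smul, ← h, hxdef, add_sub_cancel_left]
      refine ⟨hnorm.le, Or.inr ⟨hnorm, ?_⟩⟩
      rw [hw, h]
      exact sameRay_smul_smul_of_mul_nonneg <|
        mul_nonneg (div_nonneg hα hx0.le) (sub_nonneg.2 ((div_le_one hx0).2 hx.le))
  · rintro ⟨hu, rfl | ⟨hnorm, hray⟩⟩
    · rw [add_zero, ballProj_of_norm_le hu]
    · have hx : ‖u + w‖ = α + ‖w‖ := by rw [hray.norm_add, hnorm]
      rw [ballProj_of_le_norm (hx ▸ le_add_of_nonneg_right (norm_nonneg w)), hx]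
      rcases (add_nonneg hα (norm_nonneg w)).eq_or_lt with h0 | hpos
      · have hα0 : α = 0 := by linarith [norm_nonneg w]
        simp [hα0, norm_eq_zero.1 (hnorm.trans hα0)]
      · have hsmul : ‖w‖ • u = α • w := hnorm ▸ hray.norm_smul_eq.symm
        rw [eq_comm, div_eq_inv_mul, mul_smul, inv_smul_eq_iff₀ hpos.ne', smul_add, add_smul, hsmul]

end BallProj

theorem coulomb_fixed_point_equiv {d : ℕ} (β F lamN : ℝ)
    (hβ : 0 < β) (hF : 0 ≤ F) (hlamN : 0 ≤ lamN)
    (lamT v : EuclideanSpace ℝ (Fin (d - 1))) :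
    lamT = ballProj (F * lamN) (lamT + β • v) ↔
      (‖lamT‖ ≤ F * lamN ∧ ⟪lamT, v⟫ - F * lamN * ‖v‖ = 0) := by
  rw [eq_ballProj_add_iff (mul_nonneg hF hlamN), sub_eq_zero, smul_eq_zero_iff_right hβ.ne',
    sameRay_pos_smul_right_iff hβ]
  exact and_congr_right fun hT => (inner_eq_mul_norm_iff_of_norm_le hT).symm
end

section
/- Let K ⊂ ℝ^d be a polytope with vertices (x_s)_{s∈V_K} and nonnegative weights (ω_s^K) satisfying Σ_s ω_s^K = 1 and Σ_s ω_s^K x_s = x̄_K (the centroid of K). Define the reconstruction Π^K v = G (x − x̄_K) + Σ_s ω_s^K v(x_s) where G ∈ ℝ^{d×d} is the discrete gradient ∇^K of the vertex values. If q ∈ P¹(K)^d is an affine function, then ∇^K (vertex values of q) = ∇q and Π^K (vertex values of q) = q, i.e., the reconstruction operators are exact on affine functions. -/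
open scoped RealInnerProductSpace

/-!
Averaging an affine map `y ↦ A y + c₀` with weights of total mass one gives its value at the
weighted mean of the points. So each face value is `A x̄_σ + c₀`; in `∇^K` the constants `c₀`
cancel because `Σ |σ| n_{Kσ} = 0`, and `Σ |σ| x̄_σ ⊗ n_{Kσ} = |K| Id` turns the rest into
`|K| A`. The cell average is `A x̄_K + c₀`, and `Π^K` becomes `A (z - x̄_K) + A x̄_K + c₀`.
-/

section

variable {R E F 𝓕 ι : Type*} [Semiring R] [AddCommMonoid E] [Module R E] [AddCommMonoid F]
  [Module R F] [FunLike 𝓕 E F] [LinearMapClass 𝓕 R E F]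

theorem Finset.sum_smul_linear_add_const_of_sum_eq_one {s : Finset ι} {w : ι → R}
    (hw : ∑ i ∈ s, w i = 1) (f : 𝓕) (c : F) (p : ι → E) :
    ∑ i ∈ s, w i • (f (p i) + c) = f (∑ i ∈ s, w i • p i) + c := by
  simp only [smul_add, Finset.sum_add_distrib, ← Finset.sum_smul, hw, one_smul, map_sum,
    map_smul]

theorem Finset.sum_smul_linear_add_const_of_sum_eq_zero {s : Finset ι} {a : ι → R}
    (ha : ∑ i ∈ s, a i = 0) (f : 𝓕) (c : F) (p : ι → E) :
    ∑ i ∈ s, a i • (f (p i) + c) = f (∑ i ∈ s, a i • p i) := by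
  simp only [smul_add, Finset.sum_add_distrib, ← Finset.sum_smul, ha, zero_smul, add_zero,
    map_sum, map_smul]

end

theorem Finset.sum_mul_inner_eq_zero {E ι : Type*} [NormedAddCommGroup E]
    [InnerProductSpace ℝ E] {s : Finset ι} {m : ι → ℝ} {n : ι → E}
    (h : ∑ i ∈ s, m i • n i = 0) (y : E) : ∑ i ∈ s, m i * ⟪n i, y⟫ = 0 := by
  simpa [sum_inner, real_inner_smul_left] using congrArg (⟪·, y⟫) h

theorem reconstruction_exact_on_affine_general {d : ℕ} {V ι : Type*} [Fintype V] [Fintype ι]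
    (x : V → EuclideanSpace ℝ (Fin d))
    (m : ι → ℝ) (n c : ι → EuclideanSpace ℝ (Fin d))
    (w : ι → V → ℝ) (ωK : V → ℝ) (xK : EuclideanSpace ℝ (Fin d)) (vol : ℝ)
    (hvol : 0 < vol)
    (hw1 : ∀ σ, ∑ s, w σ s = 1)
    (hwc : ∀ σ, ∑ s, w σ s • x s = c σ)
    (hω1 : ∑ s, ωK s = 1)
    (hωc : ∑ s, ωK s • x s = xK)
    (hgeom0 : ∑ σ, m σ • n σ = 0)
    (hgeom1 : ∀ y : EuclideanSpace ℝ (Fin d),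
      ∑ σ, (m σ * ⟪n σ, y⟫) • c σ = vol • y)
    (A : EuclideanSpace ℝ (Fin d) →L[ℝ] EuclideanSpace ℝ (Fin d))
    (c₀ : EuclideanSpace ℝ (Fin d))
    (q : EuclideanSpace ℝ (Fin d) → EuclideanSpace ℝ (Fin d))
    (hq : ∀ y, q y = A y + c₀) :
    -- discrete gradient of the vertex values of `q` equals `∇q = A` …
    (∀ y : EuclideanSpace ℝ (Fin d),
      vol⁻¹ • (∑ σ, (m σ * ⟪n σ, y⟫) • (∑ s, w σ s • q (x s))) = A y) ∧
    -- … and the reconstruction `Π^K` reproduces `q`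
    (∀ z : EuclideanSpace ℝ (Fin d),
      vol⁻¹ • (∑ σ, (m σ * ⟪n σ, z - xK⟫) • (∑ s, w σ s • q (x s)))
        + ∑ s, ωK s • q (x s) = q z) := by
  have hface σ : ∑ s, w σ s • q (x s) = A (c σ) + c₀ := by
    simp_rw [hq]
    rw [Finset.sum_smul_linear_add_const_of_sum_eq_one (hw1 σ), hwc]
  have hcell : ∑ s, ωK s • q (x s) = A xK + c₀ := by
    simp_rw [hq]
    rw [Finset.sum_smul_linear_add_const_of_sum_eq_one hω1, hωc]
  have hgrad y : vol⁻¹ • ∑ σ, (m σ * ⟪n σ, y⟫) • (∑ s, w σ s • q (x s)) = A y := by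
    simp_rw [hface]
    rw [Finset.sum_smul_linear_add_const_of_sum_eq_zero (Finset.sum_mul_inner_eq_zero hgeom0 y),
      hgeom1, map_smul, inv_smul_smul₀ hvol.ne']
  refine ⟨hgrad, fun z => ?_⟩
  rw [hgrad, hcell, hq, map_sub]
  abel

/-- P¹-exactness of the cell reconstruction operators `∇^K` and `Π^K`.
`V` indexes the vertices `x`, `ι` indexes the faces; `m σ` is the face area,
`n σ` the outward unit normal, `w σ` the face barycentric weights (with centroid `c σ`),
`ωK` the cell barycentric weights (with centroid `xK`), and `vol = |K|`.
The geometric identities `Σ |σ| n_{Kσ} = 0` and `Σ |σ| x̄_σ ⊗ n_{Kσ} = |K| Id`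
(consequences of the divergence theorem) are assumed.  If `q` is affine,
`q x = A x + c₀`, then the discrete gradient of its vertex values equals `∇q = A`
and the linear reconstruction reproduces `q`. -/
theorem reconstruction_exact_on_affine {d : ℕ} {V ι : Type*} [Fintype V] [Fintype ι]
    (x : V → EuclideanSpace ℝ (Fin d))
    (m : ι → ℝ) (n c : ι → EuclideanSpace ℝ (Fin d))
    (w : ι → V → ℝ) (ωK : V → ℝ) (xK : EuclideanSpace ℝ (Fin d)) (vol : ℝ)
    (hm : ∀ σ, 0 < m σ) (hvol : 0 < vol)
    (hw0 : ∀ σ s, 0 ≤ w σ s) (hw1 : ∀ σ, ∑ s, w σ s = 1)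
    (hwc : ∀ σ, ∑ s, w σ s • x s = c σ)
    (hω0 : ∀ s, 0 ≤ ωK s) (hω1 : ∑ s, ωK s = 1)
    (hωc : ∑ s, ωK s • x s = xK)
    (hgeom0 : ∑ σ, m σ • n σ = 0)
    (hgeom1 : ∀ y : EuclideanSpace ℝ (Fin d),
      ∑ σ, (m σ * ⟪n σ, y⟫) • c σ = vol • y)
    (A : EuclideanSpace ℝ (Fin d) →L[ℝ] EuclideanSpace ℝ (Fin d))
    (c₀ : EuclideanSpace ℝ (Fin d))
    (q : EuclideanSpace ℝ (Fin d) → EuclideanSpace ℝ (Fin d))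
    (hq : ∀ y, q y = A y + c₀) :
    -- discrete gradient of the vertex values of `q` equals `∇q = A` …
    (∀ y : EuclideanSpace ℝ (Fin d),
      vol⁻¹ • (∑ σ, (m σ * ⟪n σ, y⟫) • (∑ s, w σ s • q (x s))) = A y) ∧
    -- … and the reconstruction `Π^K` reproduces `q`
    (∀ z : EuclideanSpace ℝ (Fin d),
      vol⁻¹ • (∑ σ, (m σ * ⟪n σ, z - xK⟫) • (∑ s, w σ s • q (x s)))
        + ∑ s, ωK s • q (x s) = q z) :=
  reconstruction_exact_on_affine_general x m n c w ωK xK vol hvol hw1 hwc hω1 hωc hgeom0 hgeom1 A c₀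
    q hq
end

section
/- Let v ∈ C⁰(σ̄)^d satisfy: (i) v vanishes at all vertices of the polygon σ and hence (being edge-wise affine) on ∂σ; (ii) Δ_τ v ∈ P¹(σ)^d; and (iii) ∫_σ v · p = 0 for all p ∈ P¹(σ)^d. Then v ≡ 0 on σ. -/
/-! Fix `w` and let `u = ⟪w, v⟫`: then `u = 0` on `∂σ`, `Δu = ⟪w, Δv⟫` is affine, and
`∫_σ u Δu = 0` is the moment of `v` against the affine field `⟪w, Δv⟫ w`. Green's identity would
give `∫_σ |∇u|² = 0`, but `u` is only `C²` inside `σ`. So test with `θ_ε(u)` instead, where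
`θ_ε' = ramp ε` vanishes on `[-ε, ε]` and equals `1` off `(-2ε, 2ε)`: `θ_ε(u)` is supported in a
compact subset of `σ`, and `∫_σ ramp ε (u) |∇u|² = -∫_σ θ_ε(u) Δu = -∫_σ (θ_ε(u) - u) Δu = O(ε)`.
Hence `∇u = 0` wherever `u ≠ 0`, so a level set `{u = c}`, `c ≠ 0`, would be a bounded clopen subset
of the plane. Taking `w = v x` gives `v x = 0`. -/

open scoped RealInnerProductSpace
open MeasureTheory

/-- An affine vector field `ℝ² → ℝ^d`. -/
def IsAffineField {dd : ℕ} (p : EuclideanSpace ℝ (Fin 2) → EuclideanSpace ℝ (Fin dd)) :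
    Prop :=
  ∃ (A : EuclideanSpace ℝ (Fin 2) →L[ℝ] EuclideanSpace ℝ (Fin dd))
    (c : EuclideanSpace ℝ (Fin dd)), ∀ x, p x = A x + c

/-- Componentwise Laplacian of a vector field on the plane. -/
noncomputable def lapl {dd : ℕ}
    (v : EuclideanSpace ℝ (Fin 2) → EuclideanSpace ℝ (Fin dd))
    (x : EuclideanSpace ℝ (Fin 2)) : EuclideanSpace ℝ (Fin dd) :=
  ∑ i : Fin 2,
    fderiv ℝ (fun y => fderiv ℝ v y (EuclideanSpace.single i 1)) x
      (EuclideanSpace.single i 1)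

open Set Filter Topology Laplacian

noncomputable def ramp (ε t : ℝ) : ℝ := min 1 (max 0 (|t| / ε - 1))

noncomputable def rampIntegral (ε s : ℝ) : ℝ := ∫ t in (0 : ℝ)..s, ramp ε t

section Ramp

variable {ε ε' s t : ℝ}

theorem continuous_ramp (ε : ℝ) : Continuous (ramp ε) := by
  unfold ramp; fun_prop

theorem ramp_nonneg : 0 ≤ ramp ε t := le_min zero_le_one (le_max_left _ _)

theorem ramp_le_one : ramp ε t ≤ 1 := min_le_left _ _

theorem ramp_eq_zero (h : |t| ≤ ε) : ramp ε t = 0 := by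
  have : |t| / ε ≤ 1 := div_le_one_of_le₀ h ((abs_nonneg t).trans h)
  simp [ramp, this]

theorem ramp_eq_one (hε : 0 < ε) (h : 2 * ε ≤ |t|) : ramp ε t = 1 := by
  have : 2 ≤ |t| / ε := (le_div_iff₀ hε).2 h
  simp only [ramp]
  rw [max_eq_right (by linarith), min_eq_left (by linarith)]

theorem ramp_le_ramp (hε' : 0 < ε') (h : ε' ≤ ε) : ramp ε t ≤ ramp ε' t := by
  unfold ramp
  gcongr

theorem hasDerivAt_rampIntegral (ε s : ℝ) : HasDerivAt (rampIntegral ε) (ramp ε s) s :=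
  (continuous_ramp ε).integral_hasStrictDerivAt 0 s |>.hasDerivAt

theorem continuous_rampIntegral (ε : ℝ) : Continuous (rampIntegral ε) :=
  continuous_iff_continuousAt.2 fun s => (hasDerivAt_rampIntegral ε s).continuousAt

theorem rampIntegral_eq_zero (h : |s| ≤ ε) : rampIntegral ε s = 0 := by
  rw [rampIntegral, intervalIntegral.integral_congr (g := fun _ => 0) fun t ht => ?_]
  · simp
  · exact ramp_eq_zero (le_trans (by simpa using abs_sub_left_of_mem_uIcc ht) h)

theorem rampIntegral_sub_self (ε s : ℝ) :
    rampIntegral ε s - s = ∫ t in (0 : ℝ)..s, (ramp ε t - 1) := by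
  rw [intervalIntegral.integral_sub ((continuous_ramp ε).intervalIntegrable _ _)
    intervalIntegrable_const, rampIntegral]
  simp

theorem abs_rampIntegral_sub_self_le (hε : 0 < ε) (s : ℝ) :
    |rampIntegral ε s - s| ≤ 2 * ε := by
  have small : ∀ s, |s| ≤ 2 * ε → |rampIntegral ε s - s| ≤ 2 * ε := fun s hs => by
    rw [rampIntegral_sub_self, ← Real.norm_eq_abs]
    refine (intervalIntegral.norm_integral_le_of_norm_le_const (C := 1) fun t _ => ?_).trans ?_
    · rw [Real.norm_eq_abs, abs_le]
      constructor <;> linarith [ramp_nonneg (ε := ε) (t := t), ramp_le_one (ε := ε) (t := t)]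
    · simpa using hs
  -- beyond `2ε` the ramp is `1`, so `rampIntegral ε s - s` no longer changes
  have flat : ∀ a, (∀ t ∈ uIcc a s, 2 * ε ≤ |t|) → rampIntegral ε s - s = rampIntegral ε a - a := by
    intro a ha
    rw [rampIntegral_sub_self, rampIntegral_sub_self,
      ← intervalIntegral.integral_add_adjacent_intervals (b := a), add_eq_left]
    · rw [intervalIntegral.integral_congr (g := fun _ => 0) fun t ht => ?_]
      · simp
      · simp [ramp_eq_one hε (ha t ht)]
    all_goals exact ((continuous_ramp ε).sub continuous_const).intervalIntegrable _ _
  have h2ε : |2 * ε| ≤ 2 * ε := (abs_of_pos (by positivity)).le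
  rcases le_or_gt |s| (2 * ε) with hs | hs
  · exact small s hs
  rcases le_total 0 s with h0 | h0
  · rw [abs_of_nonneg h0] at hs
    rw [flat (2 * ε) fun t ht => ?_]
    · exact small _ h2ε
    · rw [uIcc_of_le hs.le] at ht
      exact ht.1.trans (le_abs_self t)
  · rw [abs_of_nonpos h0] at hs
    rw [flat (-(2 * ε)) fun t ht => ?_]
    · exact small _ (by rwa [abs_neg])
    · rw [uIcc_of_ge (by linarith)] at ht
      linarith [ht.2, neg_abs_le t]

end Ramp

section Superlevel

variable {X : Type*} [TopologicalSpace X] {σ : Set X} {u : X → ℝ} {ε : ℝ}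

theorem inter_abs_ge_subset (hbd : ∀ x ∈ frontier σ, u x = 0) (hε : 0 < ε) :
    closure σ ∩ {x | ε ≤ |u x|} ⊆ σ := by
  rintro x ⟨hxc, hxu⟩
  by_contra hxσ
  have hx0 := hbd x ⟨hxc, fun hxi => hxσ (interior_subset hxi)⟩
  simp only [mem_ofPred_eq, hx0, abs_zero] at hxu
  linarith

theorem isClosed_inter_abs_ge (hu : ContinuousOn u (closure σ)) :
    IsClosed (closure σ ∩ {x | ε ≤ |u x|}) :=
  hu.abs.preimage_isClosed_of_isClosed isClosed_closure isClosed_Ici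

end Superlevel

section Constancy

variable {E F : Type*} [NormedAddCommGroup E] [NormedSpace ℝ E] [Nontrivial E]
  [NormedAddCommGroup F] [NormedSpace ℝ F] {σ : Set E} {v : E → F}

theorem eq_zero_of_fderiv_eq_zero_of_ne_zero (hσ : IsOpen σ) (hbdd : Bornology.IsBounded σ)
    (hv : ContinuousOn v (closure σ)) (hdiff : DifferentiableOn ℝ v σ)
    (hbd : ∀ x ∈ frontier σ, v x = 0) (hgrad : ∀ x ∈ σ, v x ≠ 0 → fderiv ℝ v x = 0) :
    ∀ x ∈ σ, v x = 0 := by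
  intro x₀ hx₀
  by_contra hv₀
  set S := closure σ ∩ v ⁻¹' {v x₀}
  have hSσ : S ⊆ σ := fun x ⟨hxc, hxv⟩ => by
    by_contra hxσ
    exact hv₀ (hxv.symm.trans (hbd x ⟨hxc, fun hxi => hxσ (interior_subset hxi)⟩))
  have hSclosed : IsClosed S := hv.preimage_isClosed_of_isClosed isClosed_closure isClosed_singleton
  have hSopen : IsOpen S := by
    refine isOpen_iff_mem_nhds.2 fun x hx => ?_
    have hxσ := hSσ hx
    have hvx : v x ≠ 0 := fun h => hv₀ (hx.2.symm.trans h)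
    have hvc : ContinuousAt v x :=
      (hv.mono subset_closure).continuousAt (hσ.mem_nhds hxσ)
    obtain ⟨r, hr, hball⟩ := Metric.mem_nhds_iff.1 (inter_mem (hσ.mem_nhds hxσ)
      (hvc.preimage_mem_nhds (isOpen_ne.mem_nhds hvx)))
    filter_upwards [Metric.ball_mem_nhds x hr] with y hy
    refine ⟨subset_closure (hball hy).1, ?_⟩
    refine (convex_ball x r).is_const_of_fderivWithin_eq_zero (hdiff.mono fun z hz => (hball hz).1)
      (fun z hz => ?_) hy (Metric.mem_ball_self hr) |>.trans hx.2
    rw [fderivWithin_of_isOpen Metric.isOpen_ball hz]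
    exact hgrad z (hball hz).1 (hball hz).2
  have hSuniv := (IsClopen.eq_univ ⟨hSclosed, hSopen⟩ ⟨x₀, subset_closure hx₀, rfl⟩)
  exact NormedSpace.unbounded_univ ℝ E (hbdd.subset (hSuniv ▸ hSσ))

end Constancy

section Energy

variable {E : Type*} [NormedAddCommGroup E] [NormedSpace ℝ E] {σ : Set E} {u : E → ℝ} {ε : ℝ}

theorem ContDiffOn.contDiffOn_fderiv_apply (hu : ContDiffOn ℝ 2 u σ) (hσ : IsOpen σ) (e : E) :
    ContDiffOn ℝ 1 (fun y => fderiv ℝ u y e) σ :=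
  (hu.fderiv_of_isOpen hσ le_rfl).clm_apply contDiffOn_const

theorem hasFDerivAt_indicator_rampIntegral_comp (hσ : IsOpen σ) (hu : ContinuousOn u (closure σ))
    (hdiff : DifferentiableOn ℝ u σ) (hbd : ∀ x ∈ frontier σ, u x = 0) (hε : 0 < ε) (x : E) :
    HasFDerivAt (σ.indicator fun y => rampIntegral ε (u y))
      (σ.indicator (fun y => ramp ε (u y) • fderiv ℝ u y) x) x := by
  by_cases hx : x ∈ σ
  · rw [indicator_of_mem hx]
    have hux := (hdiff.differentiableAt (hσ.mem_nhds hx)).hasFDerivAt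
    refine ((hasDerivAt_rampIntegral ε (u x)).comp_hasFDerivAt x hux).congr_of_eventuallyEq ?_
    filter_upwards [hσ.mem_nhds hx] with y hy using indicator_of_mem hy _
  · rw [indicator_of_notMem hx]
    refine (hasFDerivAt_const 0 x).congr_of_eventuallyEq ?_
    have hK := isClosed_inter_abs_ge (ε := ε) hu
    filter_upwards [hK.isOpen_compl.mem_nhds fun h => hx (inter_abs_ge_subset hbd hε h)]
      with y hy
    by_cases hyσ : y ∈ σ
    · rw [indicator_of_mem hyσ]
      exact rampIntegral_eq_zero (not_le.1 fun h => hy ⟨subset_closure hyσ, h⟩).le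
    · exact indicator_of_notMem hyσ _

variable [FiniteDimensional ℝ E] [MeasurableSpace E] [BorelSpace E] {μ : Measure E}
  [μ.IsAddHaarMeasure]

theorem integrableOn_of_eq_zero_of_abs_lt (hσ : IsOpen σ) (hbdd : Bornology.IsBounded σ)
    (hu : ContinuousOn u (closure σ)) (hbd : ∀ x ∈ frontier σ, u x = 0) (hε : 0 < ε)
    {h : E → ℝ} (hh : ContinuousOn h σ) (h0 : ∀ x ∈ σ, |u x| < ε → h x = 0) :
    IntegrableOn h σ μ := by
  have hKσ := inter_abs_ge_subset hbd hε
  have hK : IsCompact (closure σ ∩ {x | ε ≤ |u x|}) :=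
    hbdd.isCompact_closure.of_isClosed_subset (isClosed_inter_abs_ge hu) inter_subset_left
  refine ((hh.mono hKσ).integrableOn_compact hK).of_forall_sdiff_eq_zero hσ.measurableSet ?_
  exact fun x ⟨hxσ, hxK⟩ => h0 x hxσ (not_le.1 fun h => hxK ⟨subset_closure hxσ, h⟩)

theorem setIntegral_rampIntegral_mul_fderiv_fderiv (hσ : IsOpen σ) (hbdd : Bornology.IsBounded σ)
    (hu : ContinuousOn u (closure σ)) (hu2 : ContDiffOn ℝ 2 u σ)
    (hbd : ∀ x ∈ frontier σ, u x = 0) (hε : 0 < ε) (e : E) :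
    ∫ x in σ, rampIntegral ε (u x) * fderiv ℝ (fun y => fderiv ℝ u y e) x e ∂μ =
      -∫ x in σ, ramp ε (u x) * fderiv ℝ u x e ^ 2 ∂μ := by
  have hf := hasFDerivAt_indicator_rampIntegral_comp hσ hu (hu2.differentiableOn two_ne_zero) hbd hε
  set f := σ.indicator fun y => rampIntegral ε (u y)
  set g := fun y => fderiv ℝ u y e
  have hg := hu2.contDiffOn_fderiv_apply hσ e
  have hf' : ∀ x, fderiv ℝ f x e = σ.indicator (fun y => ramp ε (u y) * fderiv ℝ u y e) x := by
    intro x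
    by_cases hx : x ∈ σ <;> simp [(hf x).fderiv, hx]
  have hθ : ContinuousOn (fun x => rampIntegral ε (u x)) σ :=
    (continuous_rampIntegral ε).comp_continuousOn (hu.mono subset_closure)
  have hramp : ContinuousOn (fun x => ramp ε (u x)) σ :=
    (continuous_ramp ε).comp_continuousOn (hu.mono subset_closure)
  have hθ0 : ∀ x, |u x| < ε → rampIntegral ε (u x) = 0 := fun x hx => rampIntegral_eq_zero hx.le
  have hramp0 : ∀ x, |u x| < ε → ramp ε (u x) = 0 := fun x hx => ramp_eq_zero hx.le
  have hg' : ContinuousOn (fun x => fderiv ℝ g x e) σ :=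
    (hg.continuousOn_fderiv_of_isOpen hσ le_rfl).clm_apply continuousOn_const
  have e₁ : (fun x => fderiv ℝ f x e * g x) =
      σ.indicator fun x => ramp ε (u x) * fderiv ℝ u x e ^ 2 := by
    ext x; by_cases hx : x ∈ σ <;> simp [hf', hx, g, pow_two, mul_assoc]
  have e₂ : (fun x => f x * fderiv ℝ g x e) =
      σ.indicator fun x => rampIntegral ε (u x) * fderiv ℝ g x e := by
    ext x; by_cases hx : x ∈ σ <;> simp [f, hx]
  have e₃ : (fun x => f x * g x) = σ.indicator fun x => rampIntegral ε (u x) * g x := by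
    ext x; by_cases hx : x ∈ σ <;> simp [f, hx]
  have hsupp : tsupport f ⊆ σ := by
    refine (closure_minimal ?_ (isClosed_inter_abs_ge hu)).trans (inter_abs_ge_subset hbd hε)
    rw [support_indicator]
    exact fun x ⟨hxσ, hx⟩ => ⟨subset_closure hxσ, not_lt.1 fun h => hx (hθ0 x h)⟩
  have key := integral_mul_fderiv_eq_neg_fderiv_mul_of_integrable (μ := μ) (f := f) (g := g)
    (v := e) ?_ ?_ ?_ (fun x _ => (hf x).differentiableAt)
    (fun x hx => (hg.differentiableOn one_ne_zero).differentiableAt (hσ.mem_nhds (hsupp hx)))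
  · rwa [e₁, e₂, integral_indicator hσ.measurableSet, integral_indicator hσ.measurableSet] at key
  · rw [e₁, integrable_indicator_iff hσ.measurableSet]
    exact integrableOn_of_eq_zero_of_abs_lt hσ hbdd hu hbd hε (hramp.mul (hg.continuousOn.pow 2))
      fun x _ hx => by simp [hramp0 x hx]
  · rw [e₂, integrable_indicator_iff hσ.measurableSet]
    exact integrableOn_of_eq_zero_of_abs_lt hσ hbdd hu hbd hε (hθ.mul hg')
      fun x _ hx => by simp [hθ0 x hx]
  · rw [e₃, integrable_indicator_iff hσ.measurableSet]
    exact integrableOn_of_eq_zero_of_abs_lt hσ hbdd hu hbd hε (hθ.mul hg.continuousOn)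
      fun x _ hx => by simp [hθ0 x hx]

end Energy

section Laplacian

variable {E : Type*} [NormedAddCommGroup E] [InnerProductSpace ℝ E] [FiniteDimensional ℝ E]
  {σ : Set E} {u : E → ℝ} {ε : ℝ}

theorem laplacian_eq_sum_fderiv_fderiv_apply {F : Type*} [NormedAddCommGroup F] [NormedSpace ℝ F]
    {f : E → F} {x : E} (hf : ContDiffAt ℝ 2 f x) {ι : Type*} [Fintype ι]
    (b : OrthonormalBasis ι ℝ E) :
    Δ f x = ∑ i, fderiv ℝ (fun y => fderiv ℝ f y (b i)) x (b i) := by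
  have hdf : DifferentiableAt ℝ (fderiv ℝ f) x :=
    (hf.fderiv_right (m := 1) le_rfl).differentiableAt one_ne_zero
  rw [InnerProductSpace.laplacian_eq_iteratedFDeriv_orthonormalBasis f b]
  refine Finset.sum_congr rfl fun i _ => ?_
  rw [iteratedFDeriv_two_apply, fderiv_clm_apply hdf (differentiableAt_const _)]
  simp

variable [MeasurableSpace E] [BorelSpace E] {μ : Measure E} [μ.IsAddHaarMeasure]
  {ι : Type*} [Fintype ι]

theorem setIntegral_ramp_mul_sum_sq_fderiv (hσ : IsOpen σ) (hbdd : Bornology.IsBounded σ)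
    (hu : ContinuousOn u (closure σ)) (hu2 : ContDiffOn ℝ 2 u σ)
    (hbd : ∀ x ∈ frontier σ, u x = 0) (hε : 0 < ε) (b : OrthonormalBasis ι ℝ E) :
    ∫ x in σ, ramp ε (u x) * ∑ i, fderiv ℝ u x (b i) ^ 2 ∂μ =
      -∫ x in σ, rampIntegral ε (u x) * Δ u x ∂μ := by
  have hint := fun {h : E → ℝ} =>
    integrableOn_of_eq_zero_of_abs_lt (μ := μ) hσ hbdd hu hbd hε (h := h)
  have hramp : ContinuousOn (fun x => ramp ε (u x)) σ :=
    (continuous_ramp ε).comp_continuousOn (hu.mono subset_closure)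
  have hθ : ContinuousOn (fun x => rampIntegral ε (u x)) σ :=
    (continuous_rampIntegral ε).comp_continuousOn (hu.mono subset_closure)
  have hlhs : ∫ x in σ, ramp ε (u x) * ∑ i, fderiv ℝ u x (b i) ^ 2 ∂μ =
      ∑ i, ∫ x in σ, ramp ε (u x) * fderiv ℝ u x (b i) ^ 2 ∂μ := by
    simp_rw [Finset.mul_sum]
    exact integral_finsetSum _ fun i _ =>
      hint (hramp.mul ((hu2.contDiffOn_fderiv_apply hσ (b i)).continuousOn.pow 2))
        fun x _ hx => by simp [ramp_eq_zero hx.le]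
  have hrhs : ∫ x in σ, rampIntegral ε (u x) * Δ u x ∂μ =
      ∑ i, ∫ x in σ, rampIntegral ε (u x) * fderiv ℝ (fun y => fderiv ℝ u y (b i)) x (b i) ∂μ := by
    rw [← integral_finsetSum _ fun i _ => ?_]
    · refine setIntegral_congr_fun hσ.measurableSet fun x hx => ?_
      rw [laplacian_eq_sum_fderiv_fderiv_apply (hu2.contDiffAt (hσ.mem_nhds hx)) b, Finset.mul_sum]
    · exact hint (hθ.mul (((hu2.contDiffOn_fderiv_apply hσ (b i)).continuousOn_fderiv_of_isOpen
        hσ le_rfl).clm_apply continuousOn_const)) fun x _ hx => by simp [rampIntegral_eq_zero hx.le]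
  rw [hlhs, hrhs, ← Finset.sum_neg_distrib]
  refine Finset.sum_congr rfl fun i _ => ?_
  rw [setIntegral_rampIntegral_mul_fderiv_fderiv hσ hbdd hu hu2 hbd hε (b i), neg_neg]

end Laplacian

section Unisolvence

variable {E : Type*} [NormedAddCommGroup E] [InnerProductSpace ℝ E] [FiniteDimensional ℝ E]
  [MeasurableSpace E] [BorelSpace E] {μ : Measure E} [μ.IsAddHaarMeasure]
  {σ : Set E} {u : E → ℝ} {ε : ℝ} {ι : Type*} [Fintype ι]

theorem setIntegral_ramp_mul_sum_sq_fderiv_le (hσ : IsOpen σ) (hbdd : Bornology.IsBounded σ)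
    (hu : ContinuousOn u (closure σ)) (hu2 : ContDiffOn ℝ 2 u σ)
    (hbd : ∀ x ∈ frontier σ, u x = 0) (hΔ : IntegrableOn (Δ u) σ μ)
    (horth : ∫ x in σ, u x * Δ u x ∂μ = 0) (hε : 0 < ε) (b : OrthonormalBasis ι ℝ E) :
    ∫ x in σ, ramp ε (u x) * ∑ i, fderiv ℝ u x (b i) ^ 2 ∂μ ≤
      2 * ε * ∫ x in σ, |Δ u x| ∂μ := by
  have hK := hbdd.isCompact_closure
  have hθ : IntegrableOn (fun x => rampIntegral ε (u x) * Δ u x) σ μ :=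
    hΔ.continuousOn_mul_of_subset ((continuous_rampIntegral ε).comp_continuousOn hu) hK
      hσ.measurableSet subset_closure
  have hid : IntegrableOn (fun x => u x * Δ u x) σ μ :=
    hΔ.continuousOn_mul_of_subset hu hK hσ.measurableSet subset_closure
  have hsub : ∫ x in σ, rampIntegral ε (u x) * Δ u x ∂μ =
      ∫ x in σ, (rampIntegral ε (u x) - u x) * Δ u x ∂μ := by
    simp_rw [sub_mul]
    rw [integral_sub hθ hid, horth, sub_zero]
  rw [setIntegral_ramp_mul_sum_sq_fderiv hσ hbdd hu hu2 hbd hε b, hsub, ← integral_const_mul]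
  refine (neg_le_abs _).trans ?_
  rw [← Real.norm_eq_abs]
  refine norm_integral_le_of_norm_le (hΔ.norm.const_mul _) (ae_of_all _ fun x => ?_)
  rw [norm_mul, Real.norm_eq_abs, Real.norm_eq_abs]
  exact mul_le_mul_of_nonneg_right (abs_rampIntegral_sub_self_le hε _) (abs_nonneg _)

theorem setIntegral_ramp_mul_sum_sq_fderiv_eq_zero (hσ : IsOpen σ) (hbdd : Bornology.IsBounded σ)
    (hu : ContinuousOn u (closure σ)) (hu2 : ContDiffOn ℝ 2 u σ)
    (hbd : ∀ x ∈ frontier σ, u x = 0) (hΔ : IntegrableOn (Δ u) σ μ)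
    (horth : ∫ x in σ, u x * Δ u x ∂μ = 0) {δ : ℝ} (hδ : 0 < δ) (b : OrthonormalBasis ι ℝ E) :
    ∫ x in σ, ramp δ (u x) * ∑ i, fderiv ℝ u x (b i) ^ 2 ∂μ = 0 := by
  have hG0 : ∀ x, 0 ≤ ∑ i, fderiv ℝ u x (b i) ^ 2 := fun x =>
    Finset.sum_nonneg fun i _ => sq_nonneg _
  have hG : ContinuousOn (fun x => ∑ i, fderiv ℝ u x (b i) ^ 2) σ :=
    continuousOn_finsetSum _ fun i _ => (hu2.contDiffOn_fderiv_apply hσ (b i)).continuousOn.pow 2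
  have hint : ∀ ε > 0, IntegrableOn (fun x => ramp ε (u x) * ∑ i, fderiv ℝ u x (b i) ^ 2) σ μ :=
    fun ε hε => integrableOn_of_eq_zero_of_abs_lt hσ hbdd hu hbd hε
      (((continuous_ramp ε).comp_continuousOn (hu.mono subset_closure)).mul hG)
      fun x _ hx => by simp [ramp_eq_zero hx.le]
  refine le_antisymm ?_
    (setIntegral_nonneg hσ.measurableSet fun x _ => mul_nonneg ramp_nonneg (hG0 x))
  have hlim : Tendsto (fun ε => 2 * ε * ∫ x in σ, |Δ u x| ∂μ) (𝓝[>] 0) (𝓝 0) := by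
    have : Continuous fun ε : ℝ => 2 * ε * ∫ x in σ, |Δ u x| ∂μ := by fun_prop
    simpa using (this.tendsto 0).mono_left nhdsWithin_le_nhds
  refine ge_of_tendsto hlim ?_
  filter_upwards [Ioo_mem_nhdsGT hδ] with ε ⟨hε, hεδ⟩
  calc _ ≤ ∫ x in σ, ramp ε (u x) * ∑ i, fderiv ℝ u x (b i) ^ 2 ∂μ :=
        setIntegral_mono_on (hint δ hδ) (hint ε hε) hσ.measurableSet fun x _ =>
          mul_le_mul_of_nonneg_right (ramp_le_ramp hε hεδ.le) (hG0 x)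
    _ ≤ _ := setIntegral_ramp_mul_sum_sq_fderiv_le hσ hbdd hu hu2 hbd hΔ horth hε b

theorem fderiv_eq_zero_of_setIntegral_mul_laplacian_eq_zero (hσ : IsOpen σ)
    (hbdd : Bornology.IsBounded σ)
    (hu : ContinuousOn u (closure σ)) (hu2 : ContDiffOn ℝ 2 u σ)
    (hbd : ∀ x ∈ frontier σ, u x = 0) (hΔ : IntegrableOn (Δ u) σ μ)
    (horth : ∫ x in σ, u x * Δ u x ∂μ = 0) :
    ∀ x ∈ σ, u x ≠ 0 → fderiv ℝ u x = 0 := by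
  intro x hx hux
  set b := stdOrthonormalBasis ℝ E
  have hδ : 0 < |u x| / 2 := by positivity
  have hG : ContinuousOn (fun y => ∑ i, fderiv ℝ u y (b i) ^ 2) σ :=
    continuousOn_finsetSum _ fun i _ => (hu2.contDiffOn_fderiv_apply hσ (b i)).continuousOn.pow 2
  have hcont : ContinuousOn (fun y => ramp (|u x| / 2) (u y) * ∑ i, fderiv ℝ u y (b i) ^ 2) σ :=
    ((continuous_ramp _).comp_continuousOn (hu.mono subset_closure)).mul hG
  have hae := (setIntegral_eq_zero_iff_of_nonneg_ae (ae_of_all _ fun y =>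
    mul_nonneg ramp_nonneg (Finset.sum_nonneg fun i _ => sq_nonneg _))
    (integrableOn_of_eq_zero_of_abs_lt hσ hbdd hu hbd hδ hcont fun y _ hy => by
      simp [ramp_eq_zero hy.le])).1
    (setIntegral_ramp_mul_sum_sq_fderiv_eq_zero hσ hbdd hu hu2 hbd hΔ horth hδ b)
  have hx0 := Measure.eqOn_open_of_ae_eq hae hσ hcont continuousOn_const hx
  simp only [Pi.zero_apply] at hx0
  rw [ramp_eq_one hδ (by linarith), one_mul,
    Finset.sum_eq_zero_iff_of_nonneg fun i _ => sq_nonneg _] at hx0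
  exact ContinuousLinearMap.coe_injective (b.toBasis.ext fun i => by
    simpa using hx0 i (Finset.mem_univ i))

theorem eq_zero_of_setIntegral_mul_laplacian_eq_zero [Nontrivial E] (hσ : IsOpen σ)
    (hbdd : Bornology.IsBounded σ) (hu : ContinuousOn u (closure σ)) (hu2 : ContDiffOn ℝ 2 u σ)
    (hbd : ∀ x ∈ frontier σ, u x = 0) (hΔ : IntegrableOn (Δ u) σ μ)
    (horth : ∫ x in σ, u x * Δ u x ∂μ = 0) :
    ∀ x ∈ σ, u x = 0 :=
  eq_zero_of_fderiv_eq_zero_of_ne_zero hσ hbdd hu (hu2.differentiableOn two_ne_zero) hbd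
    (fderiv_eq_zero_of_setIntegral_mul_laplacian_eq_zero hσ hbdd hu hu2 hbd hΔ horth)

end Unisolvence

theorem IsAffineField.continuous {dd : ℕ}
    {p : EuclideanSpace ℝ (Fin 2) → EuclideanSpace ℝ (Fin dd)} (hp : IsAffineField p) :
    Continuous p := by
  obtain ⟨A, c, hAc⟩ := hp
  rw [funext hAc]
  fun_prop

theorem IsAffineField.inner_smul {dd : ℕ}
    {p : EuclideanSpace ℝ (Fin 2) → EuclideanSpace ℝ (Fin dd)} (hp : IsAffineField p)
    (w : EuclideanSpace ℝ (Fin dd)) : IsAffineField fun x => ⟪w, p x⟫ • w := by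
  obtain ⟨A, c, hAc⟩ := hp
  refine ⟨((innerSL ℝ w).comp A).smulRight w, ⟪w, c⟫ • w, fun x => ?_⟩
  simp [hAc, inner_add_right, add_smul]

theorem lapl_eq_laplacian {dd : ℕ} {v : EuclideanSpace ℝ (Fin 2) → EuclideanSpace ℝ (Fin dd)}
    {x : EuclideanSpace ℝ (Fin 2)} (hv : ContDiffAt ℝ 2 v x) : lapl v x = Δ v x := by
  rw [laplacian_eq_sum_fderiv_fderiv_apply hv (EuclideanSpace.basisFun (Fin 2) ℝ)]
  simp [lapl]

/-- Unisolvence step for the local virtual face space: if `v` is continuous on `σ̄`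
and twice continuously differentiable on the open polygon `σ`, vanishes on the
boundary `∂σ`, has affine Laplacian on `σ`, and all its moments against affine
vector fields vanish, then `v ≡ 0` on `σ`. -/
theorem virtual_face_unisolvence {dd : ℕ}
    (σ : Set (EuclideanSpace ℝ (Fin 2))) (hσopen : IsOpen σ) (hσbd : Bornology.IsBounded σ)
    (v : EuclideanSpace ℝ (Fin 2) → EuclideanSpace ℝ (Fin dd))
    (hvcont : ContinuousOn v (closure σ))
    (hvsmooth : ContDiffOn ℝ 2 v σ)
    (hbd : ∀ x ∈ frontier σ, v x = 0)
    (hlap : ∃ p, IsAffineField p ∧ ∀ x ∈ σ, lapl v x = p x)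
    (hmom : ∀ p : EuclideanSpace ℝ (Fin 2) → EuclideanSpace ℝ (Fin dd),
      IsAffineField p → ∫ x in σ, ⟪v x, p x⟫ = 0) :
    ∀ x ∈ σ, v x = 0 := by
  obtain ⟨p, hp, hlap⟩ := hlap
  have hΔ : ∀ w, ∀ x ∈ σ, Δ (fun y => ⟪w, v y⟫) x = ⟪w, p x⟫ := fun w x hx => by
    have hvx := hvsmooth.contDiffAt (hσopen.mem_nhds hx)
    rw [← hlap x hx, lapl_eq_laplacian hvx]
    exact hvx.laplacian_CLM_comp_left (l := innerSL ℝ w)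
  have hinner : ∀ w, ∀ x ∈ σ, ⟪w, v x⟫ = 0 := by
    intro w
    have hΔint : IntegrableOn (Δ fun y => ⟪w, v y⟫) σ :=
      (((continuous_const.inner hp.continuous).continuousOn.integrableOn_compact
        hσbd.isCompact_closure).mono_set subset_closure).congr_fun
          (fun x hx => (hΔ w x hx).symm) hσopen.measurableSet
    have horth : ∫ x in σ, ⟪w, v x⟫ * Δ (fun y => ⟪w, v y⟫) x = 0 := by
      rw [← hmom _ (hp.inner_smul w)]
      refine setIntegral_congr_fun hσopen.measurableSet fun x hx => ?_
      rw [hΔ w x hx, real_inner_smul_right, real_inner_comm, mul_comm]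
    exact eq_zero_of_setIntegral_mul_laplacian_eq_zero hσopen hσbd
      ((innerSL ℝ w).continuous.comp_continuousOn hvcont)
      ((innerSL ℝ w).contDiff.comp_contDiffOn hvsmooth) (fun x hx => by simp [hbd x hx])
      hΔint horth
  intro x hx
  simpa using hinner (v x) x hx
end

section
/- Let λ_n ≥ 0, u_n ≤ 0 with λ_n u_n = 0, F ≥ 0, λ_τ ∈ ℝ^{d−1} with |λ_τ| ≤ F λ_n, and v ∈ ℝ^{d−1} with λ_τ · v = F λ_n |v|. Then for every admissible test multiplier (μ_n, μ_τ) with μ_n ≥ 0 and |μ_τ| ≤ F λ_n, the variational inequality (μ_n − λ_n) u_n + (μ_τ − λ_τ) · v ≤ 0 holds. -/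
open scoped RealInnerProductSpace

/-!
By complementarity the normal term is `μₙ uₙ ≤ 0`. The sliding condition says that `λ_τ`
attains the maximum `F λₙ ‖v‖` of `μ ↦ ⟪μ, v⟫` over the ball `‖μ‖ ≤ F λₙ` (Cauchy–Schwarz),
so no admissible `μ_τ` does better.
-/

lemma sub_mul_nonpos_of_mul_eq_zero {muN lamN uN : ℝ} (hmuN : 0 ≤ muN) (huN : uN ≤ 0)
    (hcompl : lamN * uN = 0) : (muN - lamN) * uN ≤ 0 := by
  rw [sub_mul, hcompl, sub_zero]
  exact mul_nonpos_of_nonneg_of_nonpos hmuN huN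

lemma real_inner_sub_nonpos_of_inner_eq_mul_norm {E : Type*} [NormedAddCommGroup E]
    [InnerProductSpace ℝ E] {r : ℝ} {lam mu v : E} (hmu : ‖mu‖ ≤ r)
    (hlam : ⟪lam, v⟫ = r * ‖v‖) : ⟪mu - lam, v⟫ ≤ 0 := by
  rw [inner_sub_left, hlam, sub_nonpos]
  calc ⟪mu, v⟫ ≤ ‖mu‖ * ‖v‖ := real_inner_le_norm mu v
    _ ≤ r * ‖v‖ := mul_le_mul_of_nonneg_right hmu (norm_nonneg v)

theorem contact_conditions_imply_variational_inequality_general {d : ℕ}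
    (F lamN uN : ℝ) (huN : uN ≤ 0) (hcompl : lamN * uN = 0)
    (lamT v : EuclideanSpace ℝ (Fin (d - 1)))
    (hslide : ⟪lamT, v⟫ = F * lamN * ‖v‖) :
    ∀ (muN : ℝ) (muT : EuclideanSpace ℝ (Fin (d - 1))),
      0 ≤ muN → ‖muT‖ ≤ F * lamN →
      (muN - lamN) * uN + ⟪muT - lamT, v⟫ ≤ 0 := fun _ _ hmuN hmuT =>
  add_nonpos (sub_mul_nonpos_of_mul_eq_zero hmuN huN hcompl)
    (real_inner_sub_nonpos_of_inner_eq_mul_norm hmuT hslide)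

theorem contact_conditions_imply_variational_inequality {d : ℕ}
    (F lamN uN : ℝ) (hlamN : 0 ≤ lamN) (huN : uN ≤ 0) (hcompl : lamN * uN = 0)
    (hF : 0 ≤ F)
    (lamT v : EuclideanSpace ℝ (Fin (d - 1)))
    (hbound : ‖lamT‖ ≤ F * lamN)
    (hslide : ⟪lamT, v⟫ = F * lamN * ‖v‖) :
    ∀ (muN : ℝ) (muT : EuclideanSpace ℝ (Fin (d - 1))),
      0 ≤ muN → ‖muT‖ ≤ F * lamN →
      (muN - lamN) * uN + ⟪muT - lamT, v⟫ ≤ 0 :=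
  contact_conditions_imply_variational_inequality_general F lamN uN huN hcompl lamT v hslide
end

section
/- Conversely: let F ≥ 0, λ_n, u_n ∈ ℝ, λ_τ, v ∈ ℝ^{d−1}, and suppose λ_n ≥ 0, |λ_τ| ≤ F λ_n, and that for every (μ_n, μ_τ) with μ_n ≥ 0 and |μ_τ| ≤ F λ_n one has (μ_n − λ_n) u_n + (μ_τ − λ_τ) · v ≤ 0. Then u_n ≤ 0, λ_n u_n = 0, and λ_τ · v = F λ_n |v|. -/
/-!
Testing the inequality with `μ_τ = λ_τ` isolates the normal part `(μ_n - λ_n) u_n ≤ 0` for all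
`μ_n ≥ 0`: taking `μ_n = λ_n + 1` gives `u_n ≤ 0`, and `μ_n = 0`, `μ_n = 2 λ_n` give both signs of
`λ_n u_n`. Testing with `μ_n = λ_n` says that `λ_τ` maximises `⟪·, v⟫` on the ball of radius
`F λ_n`; the maximum `F λ_n ‖v‖` is attained at `(F λ_n / ‖v‖) v` and bounds `⟪λ_τ, v⟫` from above
by Cauchy–Schwarz.
-/

open scoped RealInnerProductSpace

theorem complementarity_of_forall_sub_mul_nonpos {lamN uN : ℝ} (hlamN : 0 ≤ lamN)
    (h : ∀ muN : ℝ, 0 ≤ muN → (muN - lamN) * uN ≤ 0) :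
    uN ≤ 0 ∧ lamN * uN = 0 := by
  have hup := h (lamN + 1) (by linarith)
  have hzero := h 0 le_rfl
  have hdouble := h (2 * lamN) (by linarith)
  constructor <;> nlinarith

section InnerProductSpace

variable {E : Type*} [NormedAddCommGroup E] [InnerProductSpace ℝ E]

theorem real_inner_div_norm_smul_self (r : ℝ) (v : E) : ⟪(r / ‖v‖) • v, v⟫ = r * ‖v‖ := by
  rcases eq_or_ne v 0 with rfl | hv
  · simp
  · have hvn : ‖v‖ ≠ 0 := norm_ne_zero_iff.mpr hv
    rw [real_inner_smul_left, real_inner_self_eq_norm_sq]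
    field_simp

theorem norm_div_norm_smul_self_le {r : ℝ} (hr : 0 ≤ r) (v : E) : ‖(r / ‖v‖) • v‖ ≤ r := by
  rcases eq_or_ne v 0 with rfl | hv
  · simpa using hr
  · have hvn : ‖v‖ ≠ 0 := norm_ne_zero_iff.mpr hv
    rw [norm_smul, Real.norm_eq_abs, abs_div, abs_norm, abs_of_nonneg hr, div_mul_cancel₀ _ hvn]

theorem real_inner_eq_mul_norm_of_forall_inner_sub_nonpos {r : ℝ} {lamT v : E}
    (hbound : ‖lamT‖ ≤ r) (h : ∀ muT : E, ‖muT‖ ≤ r → ⟪muT - lamT, v⟫ ≤ 0) :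
    ⟪lamT, v⟫ = r * ‖v‖ := by
  have hr : 0 ≤ r := (norm_nonneg lamT).trans hbound
  have hextremal := h ((r / ‖v‖) • v) (norm_div_norm_smul_self_le hr v)
  rw [inner_sub_left, real_inner_div_norm_smul_self] at hextremal
  have hCS : ⟪lamT, v⟫ ≤ r * ‖v‖ :=
    (real_inner_le_norm lamT v).trans (mul_le_mul_of_nonneg_right hbound (norm_nonneg v))
  linarith

end InnerProductSpace

theorem variational_inequality_implies_contact_conditions_general {d : ℕ}
    (F lamN uN : ℝ) (hlamN : 0 ≤ lamN)
    (lamT v : EuclideanSpace ℝ (Fin (d - 1)))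
    (hbound : ‖lamT‖ ≤ F * lamN)
    (hVI : ∀ (muN : ℝ) (muT : EuclideanSpace ℝ (Fin (d - 1))),
      0 ≤ muN → ‖muT‖ ≤ F * lamN →
      (muN - lamN) * uN + ⟪muT - lamT, v⟫ ≤ 0) :
    uN ≤ 0 ∧ lamN * uN = 0 ∧ ⟪lamT, v⟫ = F * lamN * ‖v‖ := by
  have hnormal : ∀ muN : ℝ, 0 ≤ muN → (muN - lamN) * uN ≤ 0 := fun muN hmuN => by
    simpa using hVI muN lamT hmuN hbound
  have htangential : ∀ muT, ‖muT‖ ≤ F * lamN → ⟪muT - lamT, v⟫ ≤ 0 := fun muT hmuT => by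
    simpa using hVI lamN muT hlamN hmuT
  obtain ⟨huN, hcompl⟩ := complementarity_of_forall_sub_mul_nonpos hlamN hnormal
  exact ⟨huN, hcompl, real_inner_eq_mul_norm_of_forall_inner_sub_nonpos hbound htangential⟩

theorem variational_inequality_implies_contact_conditions {d : ℕ}
    (F lamN uN : ℝ) (hF : 0 ≤ F) (hlamN : 0 ≤ lamN)
    (lamT v : EuclideanSpace ℝ (Fin (d - 1)))
    (hbound : ‖lamT‖ ≤ F * lamN)
    (hVI : ∀ (muN : ℝ) (muT : EuclideanSpace ℝ (Fin (d - 1))),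
      0 ≤ muN → ‖muT‖ ≤ F * lamN →
      (muN - lamN) * uN + ⟪muT - lamT, v⟫ ≤ 0) :
    uN ≤ 0 ∧ lamN * uN = 0 ∧ ⟪lamT, v⟫ = F * lamN * ‖v‖ :=
  variational_inequality_implies_contact_conditions_general F lamN uN hlamN lamT v hbound hVI
end
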